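/- There exists a positive semidefinite 16×16 complex matrix A such that W_I(π/2) = 2P + A^Γ, where A^Γ denotes the partial transpose of A with respect to the second tensor factor. In particular, the witness W_I(π/2) = W[1/2, 1/2, 3/2, 1/2] is decomposable and not optimal. -/
import Mathlib


open Matrix Complex Real

/-- The tensor (product) vector `x ⊗ y` in `ℂ¹⁶`. -/
noncomputable def tensorVec (x y : Fin 4 → ℂ) : Fin 4 × Fin 4 → ℂ :=
  fun p => x p.1 * y p.2

/-- The expectation `⟨v, W v⟩ = ∑ i, conj (v i) * (W *ᵥ v) i`. -/
noncomputable def expec (W : Matrix (Fin 4 × Fin 4) (Fin 4 × Fin 4) ℂ)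
    (v : Fin 4 × Fin 4 → ℂ) : ℂ :=
  ∑ i, star (v i) * W.mulVec v i

/-- The Bell-diagonal matrix `W[a,b,c,d]` with `(α₀,α₁,α₂,α₃) = (a,b,c,d)`:
`W((k,m),(k',m')) = α_{(m−k) mod 4}` if `k=k', m=m'`; `−1` if `k=m, k'=m', k≠k'`;
`0` otherwise. -/
noncomputable def Wabcd (a b c d : ℝ) : Matrix (Fin 4 × Fin 4) (Fin 4 × Fin 4) ℂ :=
  fun p q =>
    if p.1 = q.1 ∧ p.2 = q.2 then ((![a, b, c, d] (p.2 - p.1) : ℝ) : ℂ)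
    else if p.1 = p.2 ∧ q.1 = q.2 ∧ p.1 ≠ q.1 then -1
    else 0

/-- The class-I witness `W_I(θ)`. -/
noncomputable def WI (θ : ℝ) : Matrix (Fin 4 × Fin 4) (Fin 4 × Fin 4) ℂ :=
  Wabcd ((2 - Real.sin θ) / 2) ((1 + Real.cos θ) / 2)
        (2 - (2 - Real.sin θ) / 2) (1 - (1 + Real.cos θ) / 2)

/-- The class-II witness `W_II(θ)`. -/
noncomputable def WII (θ : ℝ) : Matrix (Fin 4 × Fin 4) (Fin 4 × Fin 4) ℂ :=
  Wabcd ((1 + Real.cos θ) / 2) ((2 - Real.sin θ) / 2)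
        (1 - (1 + Real.cos θ) / 2) (2 - (2 - Real.sin θ) / 2)

/-- The maximally entangled vector `Ψ(j,j') = (−1)^{j+1}/2` if `j = j'`, else `0`. -/
noncomputable def PsiVec : Fin 4 × Fin 4 → ℂ :=
  fun p => if p.1 = p.2 then ((-1 : ℂ) ^ ((p.1 : ℕ) + 1)) / 2 else 0

/-- The rank-one projector `P = |Ψ⟩⟨Ψ|`. -/
noncomputable def Pmat : Matrix (Fin 4 × Fin 4) (Fin 4 × Fin 4) ℂ :=
  fun u v => PsiVec u * star (PsiVec v)

open scoped ComplexOrder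

/-- Partial transpose with respect to the second tensor factor:
`X^Γ((i,j),(k,l)) = X((i,l),(k,j))`. -/
noncomputable def partialTransposeSnd (X : Matrix (Fin 4 × Fin 4) (Fin 4 × Fin 4) ℂ) :
    Matrix (Fin 4 × Fin 4) (Fin 4 × Fin 4) ℂ :=
  fun p q => X (p.1, q.2) (q.1, p.2)

/-- A "square root" matrix: `Bmatᴴ * Bmat` is the positive semidefinite matrix `A`
witnessing the decomposition `W_I(π/2) = 2P + A^Γ`. -/
noncomputable def Bmat : Matrix (Fin 4 × Fin 4) (Fin 4 × Fin 4) ℂ :=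
  fun r c =>
    if c.2 - c.1 = 1 ∨ c.2 - c.1 = 3 then
      (if r = c then 1/2 else if r = c.swap then -(1/2) else 0)
    else if c = (0,2) then (if r = (0,2) then 1 else if r = (2,0) ∨ r = (0,0) then 1/2 else 0)
    else if c = (2,0) then (if r = (0,2) then -1 else if r = (2,0) ∨ r = (0,0) then -(1/2) else 0)
    else if c = (1,3) then (if r = (1,3) then 1 else if r = (3,1) ∨ r = (1,1) then 1/2 else 0)
    else if c = (3,1) then (if r = (1,3) then -1 else if r = (3,1) ∨ r = (1,1) then -(1/2) else 0)
    else 0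

set_option maxHeartbeats 3000000 in
theorem WI_pi_half_decomposable :
    WI (π / 2) = Wabcd (1/2) (1/2) (3/2) (1/2) ∧
    ∃ A : Matrix (Fin 4 × Fin 4) (Fin 4 × Fin 4) ℂ,
      A.PosSemidef ∧ WI (π / 2) = (2 : ℂ) • Pmat + partialTransposeSnd A := by
  have heq : WI (π / 2) = Wabcd (1/2) (1/2) (3/2) (1/2) := by
    unfold WI
    rw [Real.sin_pi_div_two, Real.cos_pi_div_two]
    norm_num
  refine ⟨heq, Bmatᴴ * Bmat, Matrix.posSemidef_conjTranspose_mul_self _, ?_⟩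
  rw [heq]
  ext p q
  fin_cases p <;> fin_cases q <;>
    simp (config := { decide := true }) [Wabcd, Pmat, PsiVec, partialTransposeSnd,
      Matrix.mul_apply, Bmat, Fintype.sum_prod_type, Fin.sum_univ_four,
      conjTranspose_apply, Prod.ext_iff,
      show ((-1:Fin 4))=3 from by decide, show ((-2:Fin 4))=2 from by decide,
      show ((-3:Fin 4))=1 from by decide]
  all_goals norm_num [map_ofNat]
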